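/- Small angular cap bilinear estimate: Let 0 < c < 1. There is a constant C = C(c) such that the following holds. Let N₀, N₁, N₂, L₀, L₁, L₂ ≥ 1 be dyadic with 1 < N₀ ≤ 2⁷(1−c)^{−1}N₁, N₁ ≤ 2⁴(1−c)^{−1}N₂ and N₂ ≤ 2⁴(1−c)^{−1}N₁, let A ≥ N₁^{3/2}, and let ω₁, ω₂ ⊂ S² have angular diameter ≤ 1/A. Let f, g₁, g₂ ∈ L²(ℝ³×ℝ) with supp f ⊂ K^{±,c}_{N₀,L₀} (for either sign ±), supp g₁ ⊂ Q_{ω₁} ∩ K^−_{N₁,L₁}, supp g₂ ⊂ Q_{ω₂} ∩ K^+_{N₂,L₂}. Then |I(f,g₁,g₂)| ≤ C min(L₀,L₁,L₂)^{1/2} ‖f‖_{L²} ‖g₁‖_{L²} ‖g₂‖_{L²}. -/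

import Mathlib

noncomputable section

open MeasureTheory Real ENNReal
open scoped NNReal


abbrev Sp3 := EuclideanSpace ℝ (Fin 3)

/-- Japanese bracket `⟨r⟩ = (1 + r²)^{1/2}`. -/
def jb (r : ℝ) : ℝ := Real.sqrt (1 + r ^ 2)

/-- Space-time Fourier transform on `ℝ³ × ℝ`. -/
def ftST (u : Sp3 × ℝ → ℂ) (p : Sp3 × ℝ) : ℂ :=
  ∫ q : Sp3 × ℝ, Complex.exp (-Complex.I * (((inner ℝ q.1 p.1 : ℝ) + q.2 * p.2 : ℝ) : ℂ)) * u q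

/-- Inverse space-time Fourier transform on `ℝ³ × ℝ`. -/
def ftSTinv (u : Sp3 × ℝ → ℂ) (q : Sp3 × ℝ) : ℂ :=
  (((2 * Real.pi) ^ (4 : ℕ) : ℝ) : ℂ)⁻¹ *
    ∫ p : Sp3 × ℝ, Complex.exp (Complex.I * (((inner ℝ q.1 p.1 : ℝ) + q.2 * p.2 : ℝ) : ℂ)) * u p

/-- `X^{s,b}`-type norm with sign `σ` and propagation speed `c` (wave case: `c = 1`). -/
def Xnorm (σ c s b : ℝ) (u : Sp3 × ℝ → ℂ) : ℝ≥0∞ :=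
  (∫⁻ p : Sp3 × ℝ,
      ENNReal.ofReal
        (jb ‖p.1‖ ^ (2 * s) * jb (p.2 + σ * c * ‖p.1‖) ^ (2 * b) * ‖ftST u p‖ ^ 2)) ^ (1 / 2 : ℝ)

/-- Dyadic frequency-modulation block `K^{σ,c}_{N,L}`. -/
def Kset (σ c N L : ℝ) : Set (Sp3 × ℝ) :=
  {p | N ≤ jb ‖p.1‖ ∧ jb ‖p.1‖ ≤ 2 * N ∧ L ≤ jb (p.2 + σ * c * ‖p.1‖) ∧
    jb (p.2 + σ * c * ‖p.1‖) ≤ 2 * L}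

/-- Space-time Fourier projection onto the set `K`. -/
def Pproj (K : Set (Sp3 × ℝ)) (u : Sp3 × ℝ → ℂ) : Sp3 × ℝ → ℂ :=
  ftSTinv (K.indicator (ftST u))

def IsDyadic (N : ℝ) : Prop := ∃ k : ℕ, N = 2 ^ k

/-- `Q_ω`: space-time frequencies whose spatial direction lies in `ω ⊆ S²`. -/
def Qcap (ω : Set Sp3) : Set (Sp3 × ℝ) := {p | p.1 ≠ 0 ∧ ‖p.1‖⁻¹ • p.1 ∈ ω}

/-- Angular separation of two subsets of the sphere. -/
def angSep (ω₁ ω₂ : Set Sp3) : ℝ :=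
  sInf {θ : ℝ | ∃ x ∈ ω₁, ∃ y ∈ ω₂, θ = InnerProductGeometry.angle x y}

/-- The trilinear convolution form `I(f,g₁,g₂)`. -/
def trI (f g₁ g₂ : Sp3 × ℝ → ℂ) : ℂ :=
  ∫ q : (Sp3 × ℝ) × (Sp3 × ℝ), f (q.1.1 + q.2.1, q.1.2 + q.2.2) * g₁ q.1 * g₂ q.2

/-!
Bound `|I(f, g₁, g₂)|` by the same integral of `|f|, |g₁|, |g₂|`. For fixed `x`, the `y` with
`y ∈ supp g₂` and `x + y ∈ supp f` have spatial frequency in a cylinder of length `≈ N₂` and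
radius `≈ N₂ / A` around a direction of `ω₂`, and, by either modulation condition, temporal
frequency in an interval of length `≈ min (L₀, L₂)`. Since `A² ≥ N₁³ ≳ N₂³`, the cylinder has
volume bounded in terms of `c`, so this fibre has measure `≲ min (L₀, L₂)`; Cauchy–Schwarz in
`y` and then in `x` gives the bound with `min (L₀, L₂)^{1/2}`. Exchanging `g₁` and `g₂` gives
`min (L₀, L₁)^{1/2}`.
-/

open scoped RealInnerProductSpace

section LTwo

variable {α : Type*} [MeasurableSpace α] {μ : Measure α}

lemma lintegral_sq_eq_eLpNorm_sq (u : α → ℝ≥0∞) :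
    ∫⁻ x, u x ^ 2 ∂μ = eLpNorm u 2 μ ^ 2 := by
  have h := eLpNorm_nnreal_pow_eq_lintegral (f := u) (μ := μ) (p := 2) two_ne_zero
  simp only [NNReal.coe_ofNat, ENNReal.rpow_two, enorm_eq_self] at h
  exact_mod_cast h.symm

lemma lintegral_mul_le_eLpNorm_two_mul {u v : α → ℝ≥0∞} (hu : AEMeasurable u μ)
    (hv : AEMeasurable v μ) :
    ∫⁻ x, u x * v x ∂μ ≤ eLpNorm u 2 μ * eLpNorm v 2 μ := by
  have h := ENNReal.lintegral_mul_le_Lp_mul_Lq μ Real.HolderConjugate.two_two hu hv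
  simp only [eLpNorm_eq_lintegral_rpow_enorm_toReal two_ne_zero ofNat_ne_top, enorm_eq_self]
  simpa using h

-- Cauchy–Schwarz against the indicator of a measurable hull of `E`.
lemma sq_lintegral_le_measure_mul {u : α → ℝ≥0∞} (hu : AEMeasurable u μ) {E : Set α}
    (hE : ∀ x ∉ E, u x = 0) :
    (∫⁻ x, u x ∂μ) ^ 2 ≤ μ E * ∫⁻ x, u x ^ 2 ∂μ := by
  set χ : α → ℝ≥0∞ := (toMeasurable μ E).indicator 1
  have hu_eq : ∀ x, u x = χ x * u x := by
    intro x
    by_cases hx : x ∈ toMeasurable μ E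
    · simp [χ, hx]
    · simp [χ, hx, hE x fun h => hx (subset_toMeasurable μ E h)]
  have hχ : eLpNorm χ 2 μ ^ 2 = μ E := by
    rw [← lintegral_sq_eq_eLpNorm_sq, ← measure_toMeasurable E,
      ← lintegral_indicator_one (measurableSet_toMeasurable μ E)]
    congr 1 with x
    by_cases hx : x ∈ toMeasurable μ E <;> simp [χ, hx]
  calc (∫⁻ x, u x ∂μ) ^ 2 = (∫⁻ x, χ x * u x ∂μ) ^ 2 := by simp_rw [← hu_eq]
    _ ≤ (eLpNorm χ 2 μ * eLpNorm u 2 μ) ^ 2 := by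
        gcongr
        exact lintegral_mul_le_eLpNorm_two_mul
          (aemeasurable_one.indicator (measurableSet_toMeasurable μ E)) hu
    _ = μ E * ∫⁻ x, u x ^ 2 ∂μ := by rw [mul_pow, hχ, lintegral_sq_eq_eLpNorm_sq]

end LTwo

lemma ENNReal.le_rpow_half_mul_of_sq_le {a b B : ℝ≥0∞} (h : a ^ 2 ≤ B * b ^ 2) :
    a ≤ B ^ (1 / 2 : ℝ) * b := by
  have hsqrt : ∀ t : ℝ≥0∞, (t ^ 2) ^ (1 / 2 : ℝ) = t := fun t => by
    rw [← ENNReal.rpow_natCast, ← ENNReal.rpow_mul]; norm_num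
  calc a = (a ^ 2) ^ (1 / 2 : ℝ) := (hsqrt a).symm
    _ ≤ (B * b ^ 2) ^ (1 / 2 : ℝ) := by gcongr
    _ = B ^ (1 / 2 : ℝ) * b := by rw [ENNReal.mul_rpow_of_nonneg _ _ (by norm_num), hsqrt]

section Convolution

variable {M : Type*} [MeasurableSpace M] [AddCommGroup M] [MeasurableAdd₂ M] {μ : Measure M}

lemma AEMeasurable.comp_add_left [μ.IsAddLeftInvariant] {β : Type*} [MeasurableSpace β]
    {F : M → β} (hF : AEMeasurable F μ) (x : M) : AEMeasurable (fun y => F (x + y)) μ :=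
  hF.comp_quasiMeasurePreserving (measurePreserving_add_left μ x).quasiMeasurePreserving

lemma AEMeasurable.comp_add_right [μ.IsAddRightInvariant] {β : Type*} [MeasurableSpace β]
    {F : M → β} (hF : AEMeasurable F μ) (y : M) : AEMeasurable (fun x => F (x + y)) μ :=
  hF.comp_quasiMeasurePreserving (measurePreserving_add_right μ y).quasiMeasurePreserving

variable [SFinite μ] [μ.IsAddLeftInvariant] [μ.IsAddRightInvariant]

lemma eLpNorm_lintegral_add_mul_le {F H : M → ℝ≥0∞} {S K : Set M} {B : ℝ≥0∞}
    (hF : AEMeasurable F μ) (hH : AEMeasurable H μ)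
    (hFK : ∀ z ∉ K, F z = 0) (hHS : ∀ y ∉ S, H y = 0)
    (hB : ∀ x, μ {y | y ∈ S ∧ x + y ∈ K} ≤ B) :
    eLpNorm (fun x => ∫⁻ y, F (x + y) * H y ∂μ) 2 μ ≤
      B ^ (1 / 2 : ℝ) * (eLpNorm F 2 μ * eLpNorm H 2 μ) := by
  have hprod : AEMeasurable (Function.uncurry fun x y => F (x + y) ^ 2 * H y ^ 2) (μ.prod μ) :=
    ((hF.comp_quasiMeasurePreserving (quasiMeasurePreserving_add μ μ)).pow_const 2).mul
      (hH.comp_snd.pow_const 2)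
  have hfiber : ∀ x,
      (∫⁻ y, F (x + y) * H y ∂μ) ^ 2 ≤ B * ∫⁻ y, F (x + y) ^ 2 * H y ^ 2 ∂μ := by
    intro x
    calc (∫⁻ y, F (x + y) * H y ∂μ) ^ 2
        ≤ μ {y | y ∈ S ∧ x + y ∈ K} * ∫⁻ y, (F (x + y) * H y) ^ 2 ∂μ := by
          refine sq_lintegral_le_measure_mul (u := fun y => F (x + y) * H y)
            ((hF.comp_add_left x).mul hH) fun y hy => ?_
          by_cases hyS : y ∈ S
          · rw [hFK _ fun h => hy ⟨hyS, h⟩, zero_mul]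
          · rw [hHS y hyS, mul_zero]
      _ ≤ B * ∫⁻ y, F (x + y) ^ 2 * H y ^ 2 ∂μ := by simp_rw [mul_pow]; gcongr; exact hB x
  refine ENNReal.le_rpow_half_mul_of_sq_le ?_
  calc eLpNorm (fun x => ∫⁻ y, F (x + y) * H y ∂μ) 2 μ ^ 2
      = ∫⁻ x, (∫⁻ y, F (x + y) * H y ∂μ) ^ 2 ∂μ := (lintegral_sq_eq_eLpNorm_sq _).symm
    _ ≤ ∫⁻ x, B * ∫⁻ y, F (x + y) ^ 2 * H y ^ 2 ∂μ ∂μ := lintegral_mono hfiber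
    _ = B * ∫⁻ x, ∫⁻ y, F (x + y) ^ 2 * H y ^ 2 ∂μ ∂μ :=
        lintegral_const_mul'' _ hprod.lintegral_prod_right'
    _ = B * ∫⁻ y, ∫⁻ x, F (x + y) ^ 2 * H y ^ 2 ∂μ ∂μ := by rw [lintegral_lintegral_swap hprod]
    _ = B * ∫⁻ y, (∫⁻ x, F (x + y) ^ 2 ∂μ) * H y ^ 2 ∂μ := by
        congr 1
        exact lintegral_congr fun y => lintegral_mul_const'' _ ((hF.comp_add_right y).pow_const 2)
    _ = B * (eLpNorm F 2 μ * eLpNorm H 2 μ) ^ 2 := by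
        simp_rw [lintegral_add_right_eq_self (fun z => F z ^ 2)]
        rw [lintegral_const_mul'' _ (hH.pow_const 2), lintegral_sq_eq_eLpNorm_sq,
          lintegral_sq_eq_eLpNorm_sq, mul_pow]

lemma lintegral_mul_lintegral_add_mul_le {F G H : M → ℝ≥0∞} {S K : Set M} {B : ℝ≥0∞}
    (hF : AEMeasurable F μ) (hG : AEMeasurable G μ) (hH : AEMeasurable H μ)
    (hFK : ∀ z ∉ K, F z = 0) (hHS : ∀ y ∉ S, H y = 0)
    (hB : ∀ x, μ {y | y ∈ S ∧ x + y ∈ K} ≤ B) :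
    ∫⁻ x, G x * ∫⁻ y, F (x + y) * H y ∂μ ∂μ ≤
      B ^ (1 / 2 : ℝ) * (eLpNorm F 2 μ * eLpNorm G 2 μ * eLpNorm H 2 μ) := by
  have hconv : AEMeasurable (fun x => ∫⁻ y, F (x + y) * H y ∂μ) μ :=
    ((hF.comp_quasiMeasurePreserving (quasiMeasurePreserving_add μ μ)).mul
      hH.comp_snd).lintegral_prod_right'
  calc ∫⁻ x, G x * ∫⁻ y, F (x + y) * H y ∂μ ∂μ
      ≤ eLpNorm G 2 μ * eLpNorm (fun x => ∫⁻ y, F (x + y) * H y ∂μ) 2 μ :=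
        lintegral_mul_le_eLpNorm_two_mul hG hconv
    _ ≤ eLpNorm G 2 μ * (B ^ (1 / 2 : ℝ) * (eLpNorm F 2 μ * eLpNorm H 2 μ)) := by
        gcongr
        exact eLpNorm_lintegral_add_mul_le hF hH hFK hHS hB
    _ = B ^ (1 / 2 : ℝ) * (eLpNorm F 2 μ * eLpNorm G 2 μ * eLpNorm H 2 μ) := by ring

theorem lintegral_add_mul_mul_le {F G₁ G₂ : M → ℝ≥0∞} {K S₁ S₂ : Set M} {B₁ B₂ : ℝ≥0∞}
    (hF : AEMeasurable F μ) (hG₁ : AEMeasurable G₁ μ) (hG₂ : AEMeasurable G₂ μ)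
    (hFK : ∀ z ∉ K, F z = 0) (hG₁S : ∀ y ∉ S₁, G₁ y = 0) (hG₂S : ∀ y ∉ S₂, G₂ y = 0)
    (hB₁ : ∀ x, μ {y | y ∈ S₁ ∧ x + y ∈ K} ≤ B₁) (hB₂ : ∀ x, μ {y | y ∈ S₂ ∧ x + y ∈ K} ≤ B₂) :
    ∫⁻ q, F (q.1 + q.2) * G₁ q.1 * G₂ q.2 ∂μ.prod μ ≤
      min B₁ B₂ ^ (1 / 2 : ℝ) * (eLpNorm F 2 μ * eLpNorm G₁ 2 μ * eLpNorm G₂ 2 μ) := by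
  have hint : AEMeasurable (fun q : M × M => F (q.1 + q.2) * G₁ q.1 * G₂ q.2) (μ.prod μ) :=
    ((hF.comp_quasiMeasurePreserving (quasiMeasurePreserving_add μ μ)).mul
      hG₁.comp_fst).mul hG₂.comp_snd
  rcases min_choice B₁ B₂ with h | h <;> rw [h]
  · calc ∫⁻ q, F (q.1 + q.2) * G₁ q.1 * G₂ q.2 ∂μ.prod μ
        = ∫⁻ y, G₂ y * ∫⁻ x, F (y + x) * G₁ x ∂μ ∂μ := by
          rw [lintegral_prod_symm _ hint]
          refine lintegral_congr fun y => ?_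
          rw [← lintegral_const_mul'' (f := fun x => F (y + x) * G₁ x) _
            ((hF.comp_add_left y).mul hG₁)]
          refine lintegral_congr fun x => ?_
          rw [add_comm y x]; ring
      _ ≤ B₁ ^ (1 / 2 : ℝ) * (eLpNorm F 2 μ * eLpNorm G₂ 2 μ * eLpNorm G₁ 2 μ) :=
          lintegral_mul_lintegral_add_mul_le hF hG₂ hG₁ hFK hG₁S hB₁
      _ = _ := by ring
  · calc ∫⁻ q, F (q.1 + q.2) * G₁ q.1 * G₂ q.2 ∂μ.prod μ
        = ∫⁻ x, G₁ x * ∫⁻ y, F (x + y) * G₂ y ∂μ ∂μ := by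
          rw [lintegral_prod _ hint]
          refine lintegral_congr fun x => ?_
          rw [← lintegral_const_mul'' (f := fun y => F (x + y) * G₂ y) _
            ((hF.comp_add_left x).mul hG₂)]
          exact lintegral_congr fun y => by ring
      _ ≤ B₂ ^ (1 / 2 : ℝ) * (eLpNorm F 2 μ * eLpNorm G₁ 2 μ * eLpNorm G₂ 2 μ) :=
          lintegral_mul_lintegral_add_mul_le hF hG₁ hG₂ hFK hG₂S hB₂

end Convolution

section AxialCylinder

variable {E : Type*} [NormedAddCommGroup E] [InnerProductSpace ℝ E]

def axialCylinder (e : E) (R b : ℝ) : Set E := {ξ | |⟪ξ, e⟫| ≤ R ∧ ‖ξ - ⟪ξ, e⟫ • e‖ ≤ b}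

lemma isClosed_axialCylinder (e : E) (R b : ℝ) : IsClosed (axialCylinder e R b) := by
  have hinner : Continuous fun ξ : E => ⟪ξ, e⟫ := continuous_id.inner continuous_const
  exact (isClosed_le hinner.abs continuous_const).inter
    (isClosed_le (continuous_id.sub (hinner.smul continuous_const)).norm continuous_const)

lemma preimage_axialCylinder (T : E ≃ₗᵢ[ℝ] E) (e : E) (R b : ℝ) :
    T ⁻¹' axialCylinder (T e) R b = axialCylinder e R b := by
  ext ξ
  simp only [axialCylinder, Set.mem_preimage, Set.mem_ofPred_eq,
    LinearIsometryEquiv.inner_map_map]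
  rw [← map_smul, ← map_sub, LinearIsometryEquiv.norm_map]

lemma norm_sub_inner_smul_sq {e : E} (he : ‖e‖ = 1) (ξ : E) :
    ‖ξ - ⟪ξ, e⟫ • e‖ ^ 2 = ‖ξ‖ ^ 2 - ⟪ξ, e⟫ ^ 2 := by
  rw [norm_sub_sq_real, real_inner_smul_right, norm_smul, norm_eq_abs, he]
  ring_nf; rw [sq_abs]; ring

lemma mem_axialCylinder_of_angle_le {e ξ : E} (he : ‖e‖ = 1) {R θ : ℝ} (hR : ‖ξ‖ ≤ R)
    (hθ : InnerProductGeometry.angle ξ e ≤ θ) : ξ ∈ axialCylinder e R (R * θ) := by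
  set α := InnerProductGeometry.angle ξ e
  have hα0 : 0 ≤ α := InnerProductGeometry.angle_nonneg ξ e
  have hsin : 0 ≤ Real.sin α :=
    Real.sin_nonneg_of_nonneg_of_le_pi hα0 (InnerProductGeometry.angle_le_pi ξ e)
  have hcos : ⟪ξ, e⟫ = ‖ξ‖ * Real.cos α := by
    rw [InnerProductGeometry.cos_angle, he]
    rcases eq_or_ne ‖ξ‖ 0 with h | h
    · simp [norm_eq_zero.mp h]
    · field_simp
  have hperp : ‖ξ - ⟪ξ, e⟫ • e‖ = ‖ξ‖ * Real.sin α := by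
    rw [← sq_eq_sq₀ (norm_nonneg _) (mul_nonneg (norm_nonneg ξ) hsin),
      norm_sub_inner_smul_sq he, hcos]
    nlinarith [Real.sin_sq_add_cos_sq α]
  refine ⟨?_, ?_⟩
  · calc |⟪ξ, e⟫| ≤ ‖ξ‖ * ‖e‖ := abs_real_inner_le_norm ξ e
      _ ≤ R := by rwa [he, mul_one]
  · rw [hperp]
    exact mul_le_mul hR ((Real.sin_le hα0).trans hθ) hsin ((norm_nonneg ξ).trans hR)

end AxialCylinder

lemma volume_axialCylinder_le (n : ℕ) {e : EuclideanSpace ℝ (Fin (n + 1))} (he : ‖e‖ = 1)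
    (R b : ℝ) :
    volume (axialCylinder e R b) ≤ ENNReal.ofReal (2 * R) * ENNReal.ofReal (2 * b) ^ n := by
  set e₀ : EuclideanSpace ℝ (Fin (n + 1)) := EuclideanSpace.single 0 1
  have he₀ : ‖e₀‖ = 1 := by simp [e₀]
  set T := Submodule.reflection (ℝ ∙ (e - e₀))ᗮ
  have hTe : T e = e₀ := Submodule.reflection_sub (he.trans he₀.symm)
  set r : Fin (n + 1) → ℝ := Fin.cons R fun _ => b
  have hbox : axialCylinder e₀ R b ⊆ (MeasurableEquiv.toLp 2 (Fin (n + 1) → ℝ)).symm ⁻¹'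
      Set.univ.pi fun i => Set.Icc (-r i) (r i) := by
    rintro ξ ⟨h0, hperp⟩ i -
    refine abs_le.mp ?_
    cases i using Fin.cases with
    | zero => simpa [e₀, EuclideanSpace.inner_single_right, r] using h0
    | succ i =>
      refine le_trans (le_of_eq ?_) ((PiLp.norm_apply_le _ i.succ).trans hperp)
      simp [e₀, Fin.succ_ne_zero]
  calc volume (axialCylinder e R b) = volume (axialCylinder e₀ R b) := by
        rw [← hTe, ← preimage_axialCylinder T e R b]
        exact T.measurePreserving.measure_preimage
          (isClosed_axialCylinder _ _ _).measurableSet.nullMeasurableSet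
    _ ≤ volume (Set.univ.pi fun i => Set.Icc (-r i) (r i)) := by
        rw [← (EuclideanSpace.volume_preserving_symm_measurableEquiv_toLp _).measure_preimage
          (MeasurableSet.univ_pi fun i => measurableSet_Icc).nullMeasurableSet]
        exact measure_mono hbox
    _ = ENNReal.ofReal (2 * R) * ENNReal.ofReal (2 * b) ^ n := by
        rw [volume_pi_pi]
        simp [Real.volume_Icc, Fin.prod_univ_succ, r, two_mul]

lemma volume_slab_le {α : Type*} [MeasurableSpace α] (μ : Measure α) [SFinite μ] {T : Set α}
    (hT : MeasurableSet T) {g : α → ℝ} (hg : Measurable g) (r : ℝ) :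
    μ.prod volume {y | y.1 ∈ T ∧ |y.2 - g y.1| ≤ r} ≤ ENNReal.ofReal (2 * r) * μ T := by
  have hmeas : MeasurableSet {y : α × ℝ | y.1 ∈ T ∧ |y.2 - g y.1| ≤ r} :=
    (measurable_fst hT).inter
      (measurableSet_le (measurable_snd.sub (hg.comp measurable_fst)).abs measurable_const)
  have hfiber : ∀ ξ, volume (Prod.mk ξ ⁻¹' {y : α × ℝ | y.1 ∈ T ∧ |y.2 - g y.1| ≤ r}) ≤
      T.indicator (fun _ => ENNReal.ofReal (2 * r)) ξ := by
    intro ξ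
    by_cases hξ : ξ ∈ T
    · rw [Set.indicator_of_mem hξ, show 2 * r = g ξ + r - (g ξ - r) by ring, ← Real.volume_Icc]
      refine measure_mono fun τ hτ => ?_
      have := abs_le.mp hτ.2
      constructor <;> linarith
    · simp [hξ]
  calc μ.prod volume {y | y.1 ∈ T ∧ |y.2 - g y.1| ≤ r}
      ≤ ∫⁻ ξ, T.indicator (fun _ => ENNReal.ofReal (2 * r)) ξ ∂μ := by
        rw [Measure.prod_apply hmeas]; exact lintegral_mono hfiber
    _ = ENNReal.ofReal (2 * r) * μ T := by simp [lintegral_indicator hT]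

lemma abs_le_jb (r : ℝ) : |r| ≤ jb r := by
  rw [jb, ← Real.sqrt_sq_eq_abs]
  exact Real.sqrt_le_sqrt (by linarith)

lemma IsDyadic.one_le {N : ℝ} (h : IsDyadic N) : 1 ≤ N := by
  obtain ⟨k, rfl⟩ := h
  exact one_le_pow₀ (by norm_num)

section Kset

variable {σ c N L : ℝ} {p : Sp3 × ℝ}

lemma norm_fst_le_of_mem_Kset (hp : p ∈ Kset σ c N L) : ‖p.1‖ ≤ 2 * N :=
  (le_abs_self _).trans ((abs_le_jb _).trans hp.2.1)

lemma abs_le_of_mem_Kset (hp : p ∈ Kset σ c N L) : |p.2 + σ * c * ‖p.1‖| ≤ 2 * L :=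
  (abs_le_jb _).trans hp.2.2.2

end Kset

instance : (volume : Measure (Sp3 × ℝ)).IsAddLeftInvariant := by
  rw [Measure.volume_eq_prod]; infer_instance

instance : (volume : Measure (Sp3 × ℝ)).IsAddRightInvariant := by
  rw [Measure.volume_eq_prod]; infer_instance

-- Over each `ξ ∈ T`, each of the two modulation conditions confines `τ` to an interval.
lemma volume_fiber_Kset_le {T : Set Sp3} (hT : MeasurableSet T) (x : Sp3 × ℝ)
    (σ c N L σ₀ c₀ N₀ L₀ : ℝ) :
    volume {y | y ∈ Prod.fst ⁻¹' T ∩ Kset σ c N L ∧ x + y ∈ Kset σ₀ c₀ N₀ L₀} ≤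
      ENNReal.ofReal (4 * min L₀ L) * volume T := by
  set fiber := {y | y ∈ Prod.fst ⁻¹' T ∩ Kset σ c N L ∧ x + y ∈ Kset σ₀ c₀ N₀ L₀}
  have hsub : fiber ⊆ {y | y.1 ∈ T ∧ |y.2 - -(σ * c * ‖y.1‖)| ≤ 2 * L} := fun y hy =>
    ⟨hy.1.1, by simpa only [sub_neg_eq_add] using abs_le_of_mem_Kset hy.1.2⟩
  have hsub₀ : fiber ⊆ {y | y.1 ∈ T ∧ |y.2 - -(x.2 + σ₀ * c₀ * ‖x.1 + y.1‖)| ≤ 2 * L₀} :=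
    fun y hy => ⟨hy.1.1, by
      simpa only [sub_neg_eq_add, Prod.fst_add, Prod.snd_add, add_comm y.2, add_assoc]
        using abs_le_of_mem_Kset hy.2⟩
  rw [Measure.volume_eq_prod]
  rcases le_total L₀ L with h | h
  · rw [min_eq_left h, show 4 * L₀ = 2 * (2 * L₀) by ring]
    exact (measure_mono hsub₀).trans
      (volume_slab_le _ hT (g := fun ξ => -(x.2 + σ₀ * c₀ * ‖x.1 + ξ‖)) (by fun_prop) _)
  · rw [min_eq_right h, show 4 * L = 2 * (2 * L) by ring]
    exact (measure_mono hsub).trans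
      (volume_slab_le _ hT (g := fun ξ => -(σ * c * ‖ξ‖)) (by fun_prop) _)

lemma volume_fiber_Qcap_le {ω : Set Sp3} (hω : ω ⊆ Metric.sphere 0 1) {θ : ℝ}
    (hdiam : ∀ x ∈ ω, ∀ y ∈ ω, InnerProductGeometry.angle x y ≤ θ) (x : Sp3 × ℝ)
    {σ c N : ℝ} (hN : 0 ≤ N) (L σ₀ c₀ N₀ L₀ : ℝ) :
    volume {y | y ∈ Qcap ω ∩ Kset σ c N L ∧ x + y ∈ Kset σ₀ c₀ N₀ L₀} ≤
      ENNReal.ofReal (4 * min L₀ L) * ENNReal.ofReal (64 * N ^ 3 * θ ^ 2) := by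
  rcases ω.eq_empty_or_nonempty with rfl | ⟨e, he⟩
  · simp [Qcap]
  have hne : ‖e‖ = 1 := by simpa using hω he
  have hθ : 0 ≤ θ := (InnerProductGeometry.angle_nonneg e e).trans (hdiam e he e he)
  have hcap : Qcap ω ∩ Kset σ c N L ⊆
      Prod.fst ⁻¹' axialCylinder e (2 * N) (2 * N * θ) ∩ Kset σ c N L := by
    rintro y ⟨⟨hy0, hdir⟩, hK⟩
    refine ⟨mem_axialCylinder_of_angle_le hne (norm_fst_le_of_mem_Kset hK) ?_, hK⟩
    rw [← InnerProductGeometry.angle_smul_left_of_pos _ _ (inv_pos.mpr (norm_pos_iff.mpr hy0))]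
    exact hdiam _ hdir e he
  calc volume {y | y ∈ Qcap ω ∩ Kset σ c N L ∧ x + y ∈ Kset σ₀ c₀ N₀ L₀}
      ≤ volume {y | y ∈ Prod.fst ⁻¹' axialCylinder e (2 * N) (2 * N * θ) ∩ Kset σ c N L ∧
          x + y ∈ Kset σ₀ c₀ N₀ L₀} := measure_mono fun y hy => ⟨hcap hy.1, hy.2⟩
    _ ≤ ENNReal.ofReal (4 * min L₀ L) * volume (axialCylinder e (2 * N) (2 * N * θ)) :=
        volume_fiber_Kset_le (isClosed_axialCylinder _ _ _).measurableSet x _ _ _ _ _ _ _ _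
    _ ≤ ENNReal.ofReal (4 * min L₀ L) * ENNReal.ofReal (64 * N ^ 3 * θ ^ 2) := by
        gcongr
        refine (volume_axialCylinder_le 2 hne _ _).trans_eq ?_
        rw [← ENNReal.ofReal_pow (by positivity), ← ENNReal.ofReal_mul (by positivity)]
        ring_nf

lemma ofReal_norm_trI_le (f g₁ g₂ : Sp3 × ℝ → ℂ) :
    ENNReal.ofReal ‖trI f g₁ g₂‖ ≤
      ∫⁻ q, ‖f (q.1 + q.2)‖ₑ * ‖g₁ q.1‖ₑ * ‖g₂ q.2‖ₑ ∂volume.prod volume := by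
  rw [ofReal_norm]
  refine (enorm_integral_le_lintegral_enorm _).trans_eq ?_
  simp only [enorm_mul]
  rfl

lemma cube_mul_inv_sq_le {N N₁ A K : ℝ} (hN : 0 ≤ N) (hNK : N ≤ K * N₁) (hN₁ : 0 < N₁)
    (hA : N₁ ^ (3 / 2 : ℝ) ≤ A) : N ^ 3 * (1 / A) ^ 2 ≤ K ^ 3 := by
  have hA0 : 0 < A := (Real.rpow_pos_of_pos hN₁ _).trans_le hA
  have hA2 : N₁ ^ 3 ≤ A ^ 2 := by
    calc N₁ ^ 3 = (N₁ ^ (3 / 2 : ℝ)) ^ 2 := by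
          rw [← Real.rpow_natCast _ 2, ← Real.rpow_mul hN₁.le]; norm_num
      _ ≤ A ^ 2 := by gcongr
  have hK : 0 ≤ K := nonneg_of_mul_nonneg_left (hN.trans hNK) hN₁
  calc N ^ 3 * (1 / A) ^ 2 ≤ (K * N₁) ^ 3 / A ^ 2 := by
        rw [one_div, inv_pow, ← div_eq_mul_inv]; gcongr
    _ ≤ K ^ 3 := by
        rw [mul_pow, div_le_iff₀ (by positivity)]
        exact mul_le_mul_of_nonneg_left hA2 (by positivity)

lemma volume_fiber_Qcap_le_of_le {ω : Set Sp3} (hω : ω ⊆ Metric.sphere 0 1) {A : ℝ}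
    (hdiam : ∀ x ∈ ω, ∀ y ∈ ω, InnerProductGeometry.angle x y ≤ 1 / A) {K N N₁ L L₀ : ℝ}
    (hN : 0 ≤ N) (hNK : N ≤ K * N₁) (hN₁ : 0 < N₁) (hA : N₁ ^ (3 / 2 : ℝ) ≤ A)
    (hL : 0 ≤ min L₀ L) (x : Sp3 × ℝ) (σ c σ₀ c₀ N₀ : ℝ) :
    volume {y | y ∈ Qcap ω ∩ Kset σ c N L ∧ x + y ∈ Kset σ₀ c₀ N₀ L₀} ≤
      ENNReal.ofReal (2 ^ 8 * K ^ 3 * min L₀ L) := by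
  refine (volume_fiber_Qcap_le hω hdiam x hN _ _ _ _ _).trans ?_
  rw [← ENNReal.ofReal_mul (by positivity)]
  refine ENNReal.ofReal_le_ofReal ?_
  have := cube_mul_inv_sq_le hN hNK hN₁ hA
  nlinarith

lemma enorm_eq_zero_of_support_subset {u : Sp3 × ℝ → ℂ} {S : Set (Sp3 × ℝ)}
    (h : Function.support u ⊆ S) : ∀ y ∉ S, ‖u y‖ₑ = 0 :=
  fun y hy => enorm_eq_zero.mpr (Function.support_subset_iff'.mp h y hy)

lemma min_ofReal_mul_min {D : ℝ} (hD : 0 ≤ D) (a b c : ℝ) :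
    min (ENNReal.ofReal (D * min a b)) (ENNReal.ofReal (D * min a c)) =
      ENNReal.ofReal (D * min a (min b c)) := by
  have hmono : Monotone fun t => ENNReal.ofReal (D * t) := fun s t hst =>
    ENNReal.ofReal_le_ofReal (mul_le_mul_of_nonneg_left hst hD)
  rw [← hmono.map_min, min_min_min_comm, min_self]

lemma ofReal_mul_rpow_half {D m : ℝ} (hD : 0 ≤ D) (hm : 0 ≤ m) :
    ENNReal.ofReal (D * m) ^ (1 / 2 : ℝ) =
      ENNReal.ofReal (D ^ (1 / 2 : ℝ)) * ENNReal.ofReal (m ^ (1 / 2 : ℝ)) := by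
  rw [ENNReal.ofReal_rpow_of_nonneg (by positivity) (by norm_num), Real.mul_rpow hD hm,
    ENNReal.ofReal_mul (by positivity)]

/-- Small angular cap bilinear estimate (Proposition 3.2). -/
theorem small_cap_bilinear (c : ℝ) (hc0 : 0 < c) (hc1 : c < 1) :
    ∃ C : ℝ≥0,
      ∀ N₀ N₁ N₂ L₀ L₁ L₂ : ℝ,
        IsDyadic N₀ → IsDyadic N₁ → IsDyadic N₂ →
        IsDyadic L₀ → IsDyadic L₁ → IsDyadic L₂ →
        1 < N₀ → N₀ ≤ 2 ^ 7 * (1 - c)⁻¹ * N₁ →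
        N₁ ≤ 2 ^ 4 * (1 - c)⁻¹ * N₂ → N₂ ≤ 2 ^ 4 * (1 - c)⁻¹ * N₁ →
        ∀ A : ℝ, N₁ ^ (3 / 2 : ℝ) ≤ A →
          ∀ ω₁ ω₂ : Set Sp3, ω₁ ⊆ Metric.sphere 0 1 → ω₂ ⊆ Metric.sphere 0 1 →
            (∀ x ∈ ω₁, ∀ y ∈ ω₁, InnerProductGeometry.angle x y ≤ 1 / A) →
            (∀ x ∈ ω₂, ∀ y ∈ ω₂, InnerProductGeometry.angle x y ≤ 1 / A) →
            ∀ σ : ℝ, (σ = 1 ∨ σ = -1) →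
              ∀ f g₁ g₂ : Sp3 × ℝ → ℂ,
                MeasureTheory.MemLp f 2 volume → MeasureTheory.MemLp g₁ 2 volume →
                MeasureTheory.MemLp g₂ 2 volume →
                Function.support f ⊆ Kset σ c N₀ L₀ →
                Function.support g₁ ⊆ Qcap ω₁ ∩ Kset (-1) 1 N₁ L₁ →
                Function.support g₂ ⊆ Qcap ω₂ ∩ Kset 1 1 N₂ L₂ →
                ENNReal.ofReal ‖trI f g₁ g₂‖ ≤
                  C * ENNReal.ofReal (min L₀ (min L₁ L₂) ^ (1 / 2 : ℝ)) *
                    eLpNorm f 2 volume * eLpNorm g₁ 2 volume * eLpNorm g₂ 2 volume := by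
  set K : ℝ := 2 ^ 4 * (1 - c)⁻¹
  have hK : 1 ≤ K := by
    have : 1 ≤ (1 - c)⁻¹ := (one_le_inv₀ (by linarith)).mpr (by linarith)
    linarith
  refine ⟨((2 ^ 8 * K ^ 3) ^ (1 / 2 : ℝ)).toNNReal, ?_⟩
  intro N₀ N₁ N₂ L₀ L₁ L₂ _ hN₁ hN₂ hL₀ hL₁ hL₂ _ _ _ hN₂₁ A hA ω₁ ω₂ hω₁ hω₂ hdiam₁ hdiam₂ σ _
    f g₁ g₂ hf hg₁ hg₂ hsf hsg₁ hsg₂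
  have hN₁ : 0 < N₁ := by linarith [hN₁.one_le]
  have hL₀ := hL₀.one_le
  have hL₁ := hL₁.one_le
  have hL₂ := hL₂.one_le
  calc ENNReal.ofReal ‖trI f g₁ g₂‖
      ≤ ∫⁻ q, ‖f (q.1 + q.2)‖ₑ * ‖g₁ q.1‖ₑ * ‖g₂ q.2‖ₑ ∂volume.prod volume :=
        ofReal_norm_trI_le f g₁ g₂
    _ ≤ min (ENNReal.ofReal (2 ^ 8 * K ^ 3 * min L₀ L₁))
          (ENNReal.ofReal (2 ^ 8 * K ^ 3 * min L₀ L₂)) ^ (1 / 2 : ℝ) *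
          (eLpNorm (fun z => ‖f z‖ₑ) 2 volume * eLpNorm (fun z => ‖g₁ z‖ₑ) 2 volume *
            eLpNorm (fun z => ‖g₂ z‖ₑ) 2 volume) :=
        lintegral_add_mul_mul_le hf.1.enorm hg₁.1.enorm hg₂.1.enorm
          (enorm_eq_zero_of_support_subset hsf) (enorm_eq_zero_of_support_subset hsg₁)
          (enorm_eq_zero_of_support_subset hsg₂)
          (fun x => volume_fiber_Qcap_le_of_le hω₁ hdiam₁ hN₁.le
            (le_mul_of_one_le_left hN₁.le hK) hN₁ hA (by positivity) x _ _ _ _ _)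
          (fun x => volume_fiber_Qcap_le_of_le hω₂ hdiam₂ (by linarith [hN₂.one_le]) hN₂₁ hN₁ hA
            (by positivity) x _ _ _ _ _)
    _ = _ := by
        rw [min_ofReal_mul_min (by positivity), ofReal_mul_rpow_half (by positivity)
          (by positivity), eLpNorm_enorm, eLpNorm_enorm, eLpNorm_enorm, ENNReal.ofReal]
        ring
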